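/- arXiv:1702.06821 — 2 statements merged into one kernel-verified Lean document; each statement's English description precedes it below -/
import Mathlib

section
/- Let d₁, …, d_K be arbitrary vectors in ℂ^N and let H be an arbitrary N×N Hermitian complex matrix. Let D be the N×N real diagonal matrix whose n-th diagonal entry is Σ_{k=1}^{K} |d_k(n)|². Then λ_max(H)·D − Σ_{k=1}^{K} (d_k d_k^H) ⊙ H is positive semidefinite, where λ_max(H) is the largest eigenvalue of H. -/
open Matrix
open scoped ComplexOrder

lemma psd_smul_one_sub {N : ℕ} (H : Matrix (Fin N) (Fin N) ℂ) (hH : H.IsHermitian)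
    (r : ℝ) (hr : ∀ i, hH.eigenvalues i ≤ r) :
    (r • (1 : Matrix (Fin N) (Fin N) ℂ) - H).PosSemidef := by
  have hkey : r • (1 : Matrix (Fin N) (Fin N) ℂ) - H
      = (hH.eigenvectorUnitary : Matrix (Fin N) (Fin N) ℂ)
        * Matrix.diagonal (fun i => ((r - hH.eigenvalues i : ℝ) : ℂ))
        * (hH.eigenvectorUnitary : Matrix (Fin N) (Fin N) ℂ)ᴴ := by
    have hdiag : Matrix.diagonal (fun i : Fin N => ((r - hH.eigenvalues i : ℝ) : ℂ))
        = r • (1 : Matrix (Fin N) (Fin N) ℂ)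
          - Matrix.diagonal (RCLike.ofReal ∘ hH.eigenvalues) := by
      ext i j
      by_cases h : i = j <;>
        simp [h, Matrix.diagonal_apply, Matrix.one_apply, Complex.ofReal_sub]
    have hUU : (hH.eigenvectorUnitary : Matrix (Fin N) (Fin N) ℂ)
        * (hH.eigenvectorUnitary : Matrix (Fin N) (Fin N) ℂ)ᴴ = 1 := by
      rw [← Matrix.star_eq_conjTranspose]
      exact Matrix.mem_unitaryGroup_iff.mp hH.eigenvectorUnitary.2
    rw [hdiag, Matrix.mul_sub, Matrix.sub_mul, Matrix.mul_smul, Matrix.mul_one,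
      Matrix.smul_mul, hUU]
    congr 1
    conv_lhs => rw [hH.spectral_theorem, Unitary.conjStarAlgAut_apply, Matrix.star_eq_conjTranspose]
  rw [hkey]
  refine Matrix.PosSemidef.mul_mul_conjTranspose_same ?_ _
  refine Matrix.posSemidef_diagonal_iff.mpr fun i => ?_
  rw [Complex.zero_le_real]
  linarith [hr i]

lemma hadamard_vecMulVec_posSemidef {N : ℕ} (v : Fin N → ℂ)
    {M : Matrix (Fin N) (Fin N) ℂ} (hM : M.PosSemidef) :
    ((Matrix.vecMulVec v (star v)).hadamard M).PosSemidef := by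
  refine Matrix.posSemidef_iff_dotProduct_mulVec.mpr ⟨?_, ?_⟩
  · ext i j
    simp only [Matrix.conjTranspose_apply, Matrix.hadamard_apply, Matrix.vecMulVec_apply,
      Pi.star_apply, star_mul', star_star]
    have : star (M j i) = M i j := by
      rw [← Matrix.conjTranspose_apply, hM.1]
    rw [this]
    ring
  · intro x
    have h := hM.dotProduct_mulVec_nonneg (fun n => star (v n) * x n)
    convert h using 1
    simp only [dotProduct, Matrix.mulVec, Pi.star_apply, Matrix.hadamard_apply,
      Matrix.vecMulVec_apply, star_mul', star_star, Finset.mul_sum]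
    refine Finset.sum_congr rfl fun n _ => Finset.sum_congr rfl fun m _ => ?_
    ring

/-- For arbitrary vectors `d₁, …, d_K ∈ ℂᴺ` and a Hermitian matrix `H`,
`λ_max(H) • D - ∑ k, (d_k d_kᴴ) ⊙ H` is positive semidefinite, where `D` is the
diagonal matrix with entries `D n n = ∑ k, |d_k n|²`. -/
theorem hadamard_majorization (N K : ℕ) (hN : 0 < N)
    (d : Fin K → Fin N → ℂ)
    (H : Matrix (Fin N) (Fin N) ℂ) (hH : H.IsHermitian)
    (D : Matrix (Fin N) (Fin N) ℂ)
    (hD : D = Matrix.diagonal fun n : Fin N => ((∑ k, ‖d k n‖ ^ 2 : ℝ) : ℂ)) :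
    ((⨆ i, hH.eigenvalues i : ℝ) • D
      - ∑ k, (Matrix.vecMulVec (d k) (star (d k))).hadamard H).PosSemidef := by
  set r : ℝ := ⨆ i, hH.eigenvalues i with hr_def
  have hr : ∀ i, hH.eigenvalues i ≤ r := fun i =>
    le_ciSup (Set.Finite.bddAbove (Set.finite_range _)) i
  have h1 := psd_smul_one_sub H hH r hr
  have key : r • D - ∑ k, (Matrix.vecMulVec (d k) (star (d k))).hadamard H
      = ∑ k, (Matrix.vecMulVec (d k) (star (d k))).hadamard
          (r • (1 : Matrix (Fin N) (Fin N) ℂ) - H) := by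
    ext i j
    simp only [Matrix.sub_apply, Matrix.sum_apply, Matrix.hadamard_apply,
      Matrix.vecMulVec_apply, Matrix.smul_apply, Pi.star_apply, hD,
      Matrix.diagonal_apply, Matrix.one_apply, mul_sub, Finset.sum_sub_distrib]
    congr 1
    by_cases h : i = j
    · subst h
      simp only [if_true, Complex.real_smul, mul_one]
      push_cast
      rw [Finset.mul_sum]
      refine Finset.sum_congr rfl fun k _ => ?_
      have : ((‖d k i‖ : ℝ) : ℂ) ^ 2 = d k i * star (d k i) := by
        rw [← Complex.ofReal_pow, Complex.sq_norm, Complex.star_def, Complex.mul_conj]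
      rw [this]
      ring
    · simp [h]
  rw [key]
  refine Finset.sum_induction _ Matrix.PosSemidef
    (fun a b ha hb => ha.add hb) Matrix.PosSemidef.zero (fun k _ => ?_)
  exact hadamard_vecMulVec_posSemidef _ h1
end

section
/- For positive integers P and M, let ω_p = 2πp/(2P) for p = 1, …, 2P, let a_p ∈ ℂ^P be the vector a_p = (1, e^{iω_p}, …, e^{i(P−1)ω_p})ᵀ, let A_p = I_M ⊗ a_p, and let Φ be the M²P² × M²P² Hermitian matrix Φ = Σ_{p=1}^{2P} vec(A_p A_p^H) (vec(A_p A_p^H))^H. Then the largest eigenvalue of Φ equals 2MP². -/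
open Matrix

open Complex Finset in
private lemma aux_geom (N : ℕ) (z : ℂ) (hz : z ≠ 1) (hzN : z ^ N = 1) :
    ∑ p : Fin N, z ^ ((p : ℕ) + 1) = 0 := by
  have h : ∑ p : Fin N, z ^ ((p : ℕ) + 1) = z * ∑ i ∈ Finset.range N, z ^ i := by
    rw [Finset.mul_sum, Fin.sum_univ_eq_sum_range (fun i => z ^ (i + 1))]
    exact Finset.sum_congr rfl fun i _ => by rw [pow_succ, mul_comm]
  rw [h, geom_sum_eq hz, hzN]
  simp

open Complex Finset in
private lemma aux_sum (P : ℕ) (hP : 0 < P) (k : ℤ) (hk : k.natAbs < 2 * P) :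
    ∑ p : Fin (2 * P), Complex.exp (((k * ((p : ℕ) + 1) : ℤ) : ℂ)
        * (2 * (Real.pi : ℂ) * Complex.I / (2 * (P : ℂ)))) =
      if k = 0 then ((2 * P : ℕ) : ℂ) else 0 := by
  set c : ℂ := 2 * (Real.pi : ℂ) * Complex.I / (2 * (P : ℂ)) with hc
  have hPne : ((P : ℂ)) ≠ 0 := Nat.cast_ne_zero.mpr hP.ne'
  have hterm : ∀ p : Fin (2 * P),
      Complex.exp (((k * ((p : ℕ) + 1) : ℤ) : ℂ) * c)
        = (Complex.exp ((k : ℂ) * c)) ^ ((p : ℕ) + 1) := by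
    intro p
    rw [← Complex.exp_nat_mul]
    congr 1
    push_cast
    ring
  rw [Finset.sum_congr rfl fun p _ => hterm p]
  by_cases hk0 : k = 0
  · subst hk0
    simp [Finset.card_univ]
  · rw [if_neg hk0]
    apply aux_geom
    · intro h1
      rw [Complex.exp_eq_one_iff] at h1
      obtain ⟨n, hn⟩ := h1
      rw [hc] at hn
      have h2 : (k : ℂ) = n * (2 * P) := by
        field_simp at hn
        have hX : (2 * (Real.pi : ℂ) * Complex.I) ≠ 0 := by
          simp [Real.pi_ne_zero, Complex.I_ne_zero, Complex.ofReal_ne_zero]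
        apply mul_right_cancel₀ hX
        linear_combination (2 * (Real.pi : ℂ) * Complex.I) * hn
      have h3 : k = n * (2 * P) := by exact_mod_cast h2
      rcases eq_or_ne n 0 with rfl | hn0
      · simp at h3; exact hk0 h3
      · have : (2 * P : ℤ) ≤ |k| := by
          rw [h3, abs_mul]
          have : (1 : ℤ) ≤ |n| := Int.one_le_abs hn0
          nlinarith [abs_nonneg (n : ℤ), abs_of_nonneg (by positivity : (0:ℤ) ≤ (2*P:ℤ))]
        rw [Int.abs_eq_natAbs] at this
        omega
    · rw [← Complex.exp_nat_mul]
      have : ((2 * P : ℕ) : ℂ) * ((k : ℂ) * c) = (k : ℂ) * (2 * Real.pi * Complex.I) := by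
        rw [hc]
        field_simp
        norm_num
      rw [this]
      exact_mod_cast Complex.exp_int_mul_two_pi_mul_I k

open Complex Finset in
private lemma aux_cs {ι : Type*} (s : Finset ι) (f : ι → ℂ) :
    Complex.normSq (∑ i ∈ s, f i) ≤ (s.card : ℝ) * ∑ i ∈ s, Complex.normSq (f i) := by
  have h1 : ‖∑ i ∈ s, f i‖ ≤ ∑ i ∈ s, ‖f i‖ := by
    simpa using norm_sum_le s f
  calc Complex.normSq (∑ i ∈ s, f i) = (‖∑ i ∈ s, f i‖) ^ 2 :=
        (Complex.sq_norm _).symm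
    _ ≤ (∑ i ∈ s, ‖f i‖) ^ 2 := by
        apply pow_le_pow_left₀ (norm_nonneg _) h1
    _ ≤ (s.card : ℝ) * ∑ i ∈ s, (‖f i‖) ^ 2 := sq_sum_le_card_mul_sum_sq
    _ = (s.card : ℝ) * ∑ i ∈ s, Complex.normSq (f i) := by
        congr 1; exact Finset.sum_congr rfl fun i _ => Complex.sq_norm _

open Complex Finset in
private lemma aux_fiber {ι κ : Type*} [Fintype ι] [DecidableEq κ] (d : ι → κ) (Y : ι → ℂ) :
    ∑ q : ι, ∑ r : ι, (if d q = d r then (starRingEnd ℂ) (Y q) * Y r else 0)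
      = ∑ t ∈ Finset.image d Finset.univ,
          (starRingEnd ℂ) (∑ q ∈ Finset.univ.filter (fun q => d q = t), Y q)
            * (∑ q ∈ Finset.univ.filter (fun q => d q = t), Y q) := by
  have h1 : ∀ q : ι, ∑ r : ι, (if d q = d r then (starRingEnd ℂ) (Y q) * Y r else 0)
      = (starRingEnd ℂ) (Y q)
          * ∑ r ∈ Finset.univ.filter (fun r => d r = d q), Y r := by
    intro q
    rw [Finset.sum_filter, Finset.mul_sum]
    exact Finset.sum_congr rfl fun r _ => by
      by_cases h : d q = d r
      · rw [if_pos h, if_pos h.symm]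
      · rw [if_neg h, if_neg (fun hh => h hh.symm), mul_zero]
  rw [Finset.sum_congr rfl fun q _ => h1 q]
  rw [← Finset.sum_fiberwise_of_maps_to (fun q _ => Finset.mem_image_of_mem d (Finset.mem_univ q))
      (fun q => (starRingEnd ℂ) (Y q) * ∑ r ∈ Finset.univ.filter (fun r => d r = d q), Y r)]
  refine Finset.sum_congr rfl fun t _ => ?_
  rw [map_sum, Finset.sum_mul]
  refine Finset.sum_congr rfl fun q hq => ?_
  have hdq : d q = t := (Finset.mem_filter.mp hq).2
  rw [hdq]

open Complex Finset in
private lemma aux_inj_sum {ι κ : Type*} [Fintype ι] [Fintype κ] [DecidableEq κ] (g : ι → κ)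
    (hg : Function.Injective g) (f : κ → ℝ) (hf : ∀ x, 0 ≤ f x) :
    ∑ i : ι, f (g i) ≤ ∑ x : κ, f x := by
  rw [← Finset.sum_image (fun a _ b _ h => hg h)]
  exact Finset.sum_le_sum_of_subset_of_nonneg (Finset.subset_univ _) fun x _ _ => hf x

/-- For `ω_p = 2πp/(2P)`, `a_p = (1, e^{iω_p}, …, e^{i(P-1)ω_p})ᵀ`, `A_p = I_M ⊗ a_p`,
and `Φ = ∑_{p=1}^{2P} vec(A_p A_pᴴ) (vec(A_p A_pᴴ))ᴴ` (rows and columns indexed by pairs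
`(row index, column index)` of the `MP × MP` matrix `A_p A_pᴴ`), the largest eigenvalue
of the Hermitian matrix `Φ` equals `2MP²`. -/
theorem largest_eigenvalue_Phi (P M : ℕ) (hP : 0 < P) (hM : 0 < M)
    (a : Fin (2 * P) → Fin P → ℂ)
    (ha : ∀ (p : Fin (2 * P)) (n : Fin P),
      a p n = Complex.exp (Complex.I * ((n : ℕ) : ℂ)
        * (2 * (Real.pi : ℂ) * (((p : ℕ) : ℂ) + 1) / (2 * ((P : ℕ) : ℂ)))))
    (A : Fin (2 * P) → Matrix (Fin M × Fin P) (Fin M) ℂ)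
    (hA : ∀ (p : Fin (2 * P)) (ml : Fin M × Fin P) (m' : Fin M),
      A p ml m' = if ml.1 = m' then a p ml.2 else 0)
    (Φ : Matrix ((Fin M × Fin P) × (Fin M × Fin P)) ((Fin M × Fin P) × (Fin M × Fin P)) ℂ)
    (hΦ : Φ = ∑ p : Fin (2 * P),
      Matrix.vecMulVec (fun q => (A p * (A p)ᴴ) q.1 q.2)
        (star fun q => (A p * (A p)ᴴ) q.1 q.2))
    (hherm : Φ.IsHermitian) :
    (⨆ i, hherm.eigenvalues i) = 2 * (M : ℝ) * (P : ℝ) ^ 2 := by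
  classical
  haveI : NeZero P := ⟨hP.ne'⟩
  haveI : NeZero M := ⟨hM.ne'⟩
  -- the phase function
  set E : ℤ → Fin (2 * P) → ℂ := fun k p =>
    Complex.exp (((k * ((p : ℕ) + 1) : ℤ) : ℂ)
      * (2 * (Real.pi : ℂ) * Complex.I / (2 * (P : ℂ)))) with hE
  have hsumE : ∀ k : ℤ, k.natAbs < 2 * P →
      ∑ p : Fin (2 * P), E k p = if k = 0 then ((2 * P : ℕ) : ℂ) else 0 :=
    fun k hk => aux_sum P hP k hk
  have hE0 : ∀ p, E 0 p = 1 := by intro p; simp [hE]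
  have hmulE : ∀ (j k : ℤ) (p : Fin (2 * P)), E j p * E k p = E (j + k) p := by
    intro j k p
    rw [hE]
    dsimp only
    rw [← Complex.exp_add]
    congr 1
    push_cast
    ring
  have hconjE : ∀ (k : ℤ) (p : Fin (2 * P)), (starRingEnd ℂ) (E k p) = E (-k) p := by
    intro k p
    rw [hE]
    dsimp only
    rw [← Complex.exp_conj]
    congr 1
    simp only [_root_.map_mul, map_div₀, map_intCast, map_ofNat, Complex.conj_I, Complex.conj_ofReal,
      map_natCast]
    push_cast
    ring
  have haE : ∀ (p : Fin (2 * P)) (l : Fin P), a p l = E ((l : ℕ) : ℤ) p := by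
    intro p l
    rw [ha, hE]
    dsimp only
    congr 1
    push_cast
    ring
  -- the vectors v p
  set v : Fin (2 * P) → ((Fin M × Fin P) × (Fin M × Fin P)) → ℂ :=
    fun p q => (A p * (A p)ᴴ) q.1 q.2 with hvdef
  have hv : ∀ (p : Fin (2 * P)) (q : (Fin M × Fin P) × (Fin M × Fin P)),
      v p q = if q.1.1 = q.2.1 then E ((q.1.2 : ℕ) - ((q.2.2 : ℕ) : ℤ)) p else 0 := by
    intro p ⟨⟨m, l⟩, ⟨m', l'⟩⟩
    simp only [hvdef, Matrix.mul_apply, Matrix.conjTranspose_apply, hA]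
    by_cases hmm : m = m'
    · subst hmm
      rw [if_pos rfl, Finset.sum_eq_single m]
      · rw [if_pos rfl, if_pos rfl, haE, haE, RCLike.star_def, hconjE, hmulE, ← sub_eq_add_neg]
      · intro b _ hb
        rw [if_neg (fun h => hb h.symm), zero_mul]
      · intro h; exact absurd (Finset.mem_univ m) h
    · rw [if_neg hmm]
      apply Finset.sum_eq_zero
      intro b _
      by_cases h1 : m = b
      · subst h1
        rw [show (if m' = m then a p l' else 0) = 0 from if_neg (fun h => hmm h.symm),
          star_zero, mul_zero]
      · rw [if_neg h1, zero_mul]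
  have hΦapp : ∀ q r, Φ q r = ∑ p : Fin (2 * P), v p q * (starRingEnd ℂ) (v p r) := by
    intro q r
    rw [hΦ]
    simp [Matrix.sum_apply, Matrix.vecMulVec_apply, hvdef]
  -- the candidate top eigenvector : vec(I)
  set x₀ : ((Fin M × Fin P) × (Fin M × Fin P)) → ℂ := fun q => if q.1 = q.2 then 1 else 0
    with hx₀def
  have hinner : ∀ p, (∑ r, (starRingEnd ℂ) (v p r) * x₀ r) = ((M * P : ℕ) : ℂ) := by
    intro p
    have h1 : ∀ r : (Fin M × Fin P) × (Fin M × Fin P),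
        (starRingEnd ℂ) (v p r) * x₀ r
          = if r.1 = r.2 then (starRingEnd ℂ) (v p r) else 0 := by
      intro r
      rw [hx₀def]
      dsimp only
      split_ifs <;> simp
    rw [Finset.sum_congr rfl fun r _ => h1 r, Fintype.sum_prod_type]
    have h2 : ∀ s : Fin M × Fin P,
        (∑ t : Fin M × Fin P, if s = t then (starRingEnd ℂ) (v p (s, t)) else 0) = 1 := by
      intro s
      rw [Finset.sum_ite_eq Finset.univ s (fun t => (starRingEnd ℂ) (v p (s, t))),
        if_pos (Finset.mem_univ s), hv]
      simp [hE0]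
    rw [Finset.sum_congr rfl fun s _ => h2 s]
    simp [Finset.card_univ]
  have hsum_v : ∀ q, (∑ p, v p q) = ((2 * P : ℕ) : ℂ) * x₀ q := by
    intro q
    rw [Finset.sum_congr rfl fun p _ => hv p q]
    by_cases h : q.1.1 = q.2.1
    · simp only [if_pos h]
      rw [hsumE _ (by have h1 := q.1.2.isLt; have h2 := q.2.2.isLt; omega)]
      rw [hx₀def]
      dsimp only
      by_cases h2 : q.1.2 = q.2.2
      · rw [if_pos (by rw [h2]; ring), if_pos (Prod.ext h h2), mul_one]
      · rw [if_neg (fun hh : ((q.1.2 : ℕ) : ℤ) - ((q.2.2 : ℕ) : ℤ) = 0 =>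
            h2 (Fin.ext (by omega))),
          if_neg (fun hh => h2 (congrArg Prod.snd hh)), mul_zero]
    · simp only [if_neg h]
      rw [Finset.sum_const_zero, hx₀def]
      dsimp only
      rw [if_neg (fun hh => h (congrArg Prod.fst hh)), mul_zero]
  have hmulvec : Φ *ᵥ x₀ = ((2 * (M : ℝ) * (P : ℝ) ^ 2 : ℝ) : ℂ) • x₀ := by
    funext q
    have h0 : (Φ *ᵥ x₀) q = ∑ r, Φ q r * x₀ r := rfl
    rw [h0, Finset.sum_congr rfl fun r _ => by rw [hΦapp q r]]
    have hswap : ∑ r, (∑ p, v p q * (starRingEnd ℂ) (v p r)) * x₀ r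
        = ∑ p, v p q * (∑ r, (starRingEnd ℂ) (v p r) * x₀ r) := by
      simp_rw [Finset.sum_mul, Finset.mul_sum]
      rw [Finset.sum_comm]
      exact Finset.sum_congr rfl fun p _ => Finset.sum_congr rfl fun r _ => by ring
    rw [hswap, Finset.sum_congr rfl fun p _ => by rw [hinner p], ← Finset.sum_mul, hsum_v,
      Pi.smul_apply, smul_eq_mul]
    push_cast
    ring
  have hx0ne : x₀ ≠ 0 := by
    intro h
    have h0 := congrFun h ((⟨0, hM⟩, ⟨0, hP⟩), (⟨0, hM⟩, ⟨0, hP⟩))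
    rw [hx₀def] at h0
    simp at h0
  have heig : Module.End.HasEigenvalue (Matrix.toLinAlgEquiv' Φ)
      ((2 * (M : ℝ) * (P : ℝ) ^ 2 : ℝ) : ℂ) := by
    apply Module.End.hasEigenvalue_of_hasEigenvector (x := x₀)
    refine ⟨Module.End.mem_eigenspace_iff.mpr ?_, hx0ne⟩
    rw [Matrix.toLinAlgEquiv'_apply, hmulvec]
  have hspec : ((2 * (M : ℝ) * (P : ℝ) ^ 2 : ℝ) : ℂ) ∈ spectrum ℂ Φ := by
    rw [← AlgEquiv.spectrum_eq Matrix.toLinAlgEquiv' Φ]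
    exact Module.End.hasEigenvalue_iff_mem_spectrum.mp heig
  have hspecR : (2 * (M : ℝ) * (P : ℝ) ^ 2 : ℝ) ∈ spectrum ℝ Φ := by
    rw [← spectrum.algebraMap_mem_iff ℂ]
    simpa using hspec
  rw [hherm.spectrum_real_eq_range_eigenvalues] at hspecR
  obtain ⟨i₀, hi₀⟩ := hspecR
  haveI : Nonempty ((Fin M × Fin P) × (Fin M × Fin P)) :=
    ⟨((⟨0, hM⟩, ⟨0, hP⟩), (⟨0, hM⟩, ⟨0, hP⟩))⟩
  -- upper bound for every eigenvalue
  have hub : ∀ i, hherm.eigenvalues i ≤ 2 * (M : ℝ) * (P : ℝ) ^ 2 := by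
    intro i
    set u : ((Fin M × Fin P) × (Fin M × Fin P)) → ℂ :=
      (WithLp.equiv 2 _) (hherm.eigenvectorBasis i) with hudef
    have hnorm1 : ∑ q, Complex.normSq (u q) = 1 := by
      have hb := hherm.eigenvectorBasis.orthonormal.1 i
      rw [EuclideanSpace.norm_eq, Real.sqrt_eq_one] at hb
      rw [← hb]
      exact Finset.sum_congr rfl fun q _ => by
        rw [← Complex.sq_norm]
        rfl
    set Y : Fin P × Fin P → ℂ := fun q => ∑ m : Fin M, u ((m, q.1), (m, q.2)) with hYdef
    set d : Fin P × Fin P → ℤ := fun q => ((q.2 : ℕ) : ℤ) - ((q.1 : ℕ) : ℤ) with hddef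
    set c : Fin (2 * P) → ℂ := fun p => ∑ r, (starRingEnd ℂ) (v p r) * u r with hcdef
    have hc : ∀ p, c p = ∑ q : Fin P × Fin P, E (d q) p * Y q := by
      intro p
      rw [hcdef]
      dsimp only
      rw [Fintype.sum_prod_type]
      have h1 : ∀ s : Fin M × Fin P,
          ∑ t : Fin M × Fin P, (starRingEnd ℂ) (v p (s, t)) * u (s, t)
            = ∑ l' : Fin P, E (((l' : ℕ) : ℤ) - ((s.2 : ℕ) : ℤ)) p * u (s, (s.1, l')) := by
        intro s
        rw [Fintype.sum_prod_type, Finset.sum_comm]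
        refine Finset.sum_congr rfl fun l' _ => ?_
        have h2 : ∀ m' : Fin M, (starRingEnd ℂ) (v p (s, (m', l'))) * u (s, (m', l'))
            = if s.1 = m' then E (((l' : ℕ) : ℤ) - ((s.2 : ℕ) : ℤ)) p * u (s, (m', l'))
              else 0 := by
          intro m'
          rw [hv]
          dsimp only
          by_cases h : s.1 = m'
          · rw [if_pos h, if_pos h, hconjE, neg_sub]
          · rw [if_neg h, if_neg h, map_zero, zero_mul]
        rw [Finset.sum_congr rfl fun m' _ => h2 m',
          Finset.sum_ite_eq Finset.univ s.1
            (fun m' => E (((l' : ℕ) : ℤ) - ((s.2 : ℕ) : ℤ)) p * u (s, (m', l'))),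
          if_pos (Finset.mem_univ _)]
      rw [Finset.sum_congr rfl fun s _ => h1 s]
      have hrhs : ∑ q : Fin P × Fin P, E (d q) p * Y q
          = ∑ l : Fin P, ∑ l' : Fin P, ∑ m : Fin M,
              E (((l' : ℕ) : ℤ) - ((l : ℕ) : ℤ)) p * u ((m, l), (m, l')) := by
        rw [Fintype.sum_prod_type]
        refine Finset.sum_congr rfl fun l _ => Finset.sum_congr rfl fun l' _ => ?_
        rw [hYdef, hddef]
        dsimp only
        rw [Finset.mul_sum]
      rw [hrhs, Fintype.sum_prod_type, Finset.sum_comm]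
      refine Finset.sum_congr rfl fun l _ => ?_
      rw [Finset.sum_comm]
    -- the Gram-type computation
    have hQ : ∑ p, (starRingEnd ℂ) (c p) * c p
        = ((2 * P : ℕ) : ℂ) * ∑ q : Fin P × Fin P, ∑ r : Fin P × Fin P,
            (if d q = d r then (starRingEnd ℂ) (Y q) * Y r else 0) := by
      have h1 : ∀ p, (starRingEnd ℂ) (c p) * c p
          = ∑ q : Fin P × Fin P, ∑ r : Fin P × Fin P,
              (starRingEnd ℂ) (Y q) * Y r * E (d r - d q) p := by
        intro p
        rw [hc p, map_sum, Finset.sum_mul_sum]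
        refine Finset.sum_congr rfl fun q _ => Finset.sum_congr rfl fun r _ => ?_
        rw [_root_.map_mul, hconjE]
        rw [show E (-d q) p * (starRingEnd ℂ) (Y q) * (E (d r) p * Y r)
            = (starRingEnd ℂ) (Y q) * Y r * (E (d r) p * E (-d q) p) by ring, hmulE,
          ← sub_eq_add_neg]
      rw [Finset.sum_congr rfl fun p _ => h1 p]
      rw [Finset.sum_comm, Finset.mul_sum]
      refine Finset.sum_congr rfl fun q _ => ?_
      rw [Finset.sum_comm, Finset.mul_sum]
      refine Finset.sum_congr rfl fun r _ => ?_
      rw [← Finset.mul_sum, hsumE (d r - d q) (by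
        have h1 := q.1.isLt
        have h2 := q.2.isLt
        have h3 := r.1.isLt
        have h4 := r.2.isLt
        rw [hddef]
        dsimp only
        omega)]
      by_cases h : d q = d r
      · rw [if_pos (by rw [h, sub_self]), if_pos h]
        ring
      · rw [if_neg (fun hh => h (by omega)), if_neg h, mul_zero, mul_zero]
    -- quadratic form identity
    have h1c : ∀ p, (starRingEnd ℂ) (c p) = ∑ q, (starRingEnd ℂ) (u q) * v p q := by
      intro p
      rw [hcdef]
      dsimp only
      rw [map_sum]
      exact Finset.sum_congr rfl fun q _ => by
        rw [_root_.map_mul, Complex.conj_conj]; ring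
    have hform : dotProduct (star u) (Φ *ᵥ u) = ∑ p, (starRingEnd ℂ) (c p) * c p := by
      rw [dotProduct]
      have h2 : ∀ q, (star u) q * (Φ *ᵥ u) q
          = ∑ r, ∑ p, (starRingEnd ℂ) (u q) * v p q * ((starRingEnd ℂ) (v p r) * u r) := by
        intro q
        have h0 : (Φ *ᵥ u) q = ∑ r, Φ q r * u r := rfl
        rw [Pi.star_apply, RCLike.star_def, h0, Finset.mul_sum]
        refine Finset.sum_congr rfl fun r _ => ?_
        rw [hΦapp, Finset.sum_mul, Finset.mul_sum]
        exact Finset.sum_congr rfl fun p _ => by ring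
      rw [Finset.sum_congr rfl fun q _ => h2 q,
        Finset.sum_congr rfl fun q (_ : q ∈ Finset.univ) => Finset.sum_comm, Finset.sum_comm]
      refine Finset.sum_congr rfl fun p _ => ?_
      rw [h1c, hcdef]
      dsimp only
      rw [Finset.sum_mul_sum]
    -- pass to real parts
    set S : ℤ → ℂ := fun t => ∑ q ∈ Finset.univ.filter (fun q => d q = t), Y q with hSdef
    have hre : (dotProduct (star u) (Φ *ᵥ u)).re
        = (2 * P : ℝ) * ∑ t ∈ Finset.image d Finset.univ, Complex.normSq (S t) := by
      rw [hform, hQ, aux_fiber d Y]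
      have h3 : ∑ t ∈ Finset.image d Finset.univ,
          (starRingEnd ℂ) (∑ q ∈ Finset.univ.filter (fun q => d q = t), Y q)
            * (∑ q ∈ Finset.univ.filter (fun q => d q = t), Y q)
          = ((∑ t ∈ Finset.image d Finset.univ, Complex.normSq (S t) : ℝ) : ℂ) := by
        rw [Complex.ofReal_sum]
        exact Finset.sum_congr rfl fun t _ => by
          rw [hSdef]; dsimp only; rw [mul_comm, Complex.mul_conj]
      rw [h3, ← Complex.ofReal_natCast, ← Complex.ofReal_mul, Complex.ofReal_re]
      push_cast
      ring
    -- bound the fibers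
    have hfibercard : ∀ t : ℤ, (Finset.univ.filter (fun q : Fin P × Fin P => d q = t)).card
        ≤ P := by
      intro t
      have hinj : Set.InjOn Prod.fst
          (↑(Finset.univ.filter (fun q : Fin P × Fin P => d q = t)) :
            Set (Fin P × Fin P)) := by
        intro q hq r hr hqr
        simp only [Finset.coe_filter, Set.mem_setOf_eq] at hq hr
        have e1 : ((q.2 : ℕ) : ℤ) - ((q.1 : ℕ) : ℤ) = t := hq.2
        have e2 : ((r.2 : ℕ) : ℤ) - ((r.1 : ℕ) : ℤ) = t := hr.2
        have e3 : (q.1 : ℕ) = (r.1 : ℕ) := congrArg Fin.val hqr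
        exact Prod.ext hqr (Fin.ext (by omega))
      have := Finset.card_le_card_of_injOn Prod.fst
        (fun q _ => Finset.mem_univ q.1) hinj
      simpa [Finset.card_univ] using this
    have hSbound : ∀ t ∈ Finset.image d Finset.univ, Complex.normSq (S t)
        ≤ (P : ℝ) * ∑ q ∈ Finset.univ.filter (fun q => d q = t), Complex.normSq (Y q) := by
      intro t _
      calc Complex.normSq (S t)
          ≤ ((Finset.univ.filter (fun q => d q = t)).card : ℝ)
            * ∑ q ∈ Finset.univ.filter (fun q => d q = t), Complex.normSq (Y q) :=
            aux_cs _ Y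
        _ ≤ (P : ℝ) * ∑ q ∈ Finset.univ.filter (fun q => d q = t), Complex.normSq (Y q) := by
            apply mul_le_mul_of_nonneg_right (by exact_mod_cast hfibercard t)
            exact Finset.sum_nonneg fun _ _ => Complex.normSq_nonneg _
    have hT : ∑ t ∈ Finset.image d Finset.univ, Complex.normSq (S t)
        ≤ (P : ℝ) * ∑ q : Fin P × Fin P, Complex.normSq (Y q) := by
      calc ∑ t ∈ Finset.image d Finset.univ, Complex.normSq (S t)
          ≤ ∑ t ∈ Finset.image d Finset.univ,
              (P : ℝ) * ∑ q ∈ Finset.univ.filter (fun q => d q = t), Complex.normSq (Y q) :=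
            Finset.sum_le_sum hSbound
        _ = (P : ℝ) * ∑ t ∈ Finset.image d Finset.univ,
              ∑ q ∈ Finset.univ.filter (fun q => d q = t), Complex.normSq (Y q) :=
            (Finset.mul_sum _ _ _).symm
        _ = (P : ℝ) * ∑ q : Fin P × Fin P, Complex.normSq (Y q) := by
            rw [Finset.sum_fiberwise_of_maps_to
              (fun q _ => Finset.mem_image_of_mem d (Finset.mem_univ q))]
    have hYbound : ∑ q : Fin P × Fin P, Complex.normSq (Y q) ≤ (M : ℝ) := by
      have hY1 : ∀ q : Fin P × Fin P, Complex.normSq (Y q)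
          ≤ (M : ℝ) * ∑ m : Fin M, Complex.normSq (u ((m, q.1), (m, q.2))) := by
        intro q
        have := aux_cs Finset.univ (fun m : Fin M => u ((m, q.1), (m, q.2)))
        rw [hYdef]
        simpa [Finset.card_univ] using this
      calc ∑ q : Fin P × Fin P, Complex.normSq (Y q)
          ≤ ∑ q : Fin P × Fin P, (M : ℝ)
              * ∑ m : Fin M, Complex.normSq (u ((m, q.1), (m, q.2))) :=
            Finset.sum_le_sum fun q _ => hY1 q
        _ = (M : ℝ) * ∑ q : Fin P × Fin P,
              ∑ m : Fin M, Complex.normSq (u ((m, q.1), (m, q.2))) :=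
            (Finset.mul_sum _ _ _).symm
        _ ≤ (M : ℝ) * 1 := by
            apply mul_le_mul_of_nonneg_left _ (Nat.cast_nonneg M)
            rw [← hnorm1]
            have hinj : Function.Injective
                (fun x : (Fin P × Fin P) × Fin M => ((x.2, x.1.1), (x.2, x.1.2))) := by
              intro x y h
              simp only [Prod.mk.injEq] at h
              exact Prod.ext (Prod.ext h.1.2 h.2.2) h.1.1
            have h5 := aux_inj_sum _ hinj (fun w => Complex.normSq (u w))
              (fun w => Complex.normSq_nonneg _)
            rw [Fintype.sum_prod_type] at h5
            exact h5
        _ = (M : ℝ) := mul_one _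
    -- put it together
    have heigeq : hherm.eigenvalues i = (dotProduct (star u) (Φ *ᵥ u)).re :=
      hherm.eigenvalues_eq i
    rw [heigeq, hre]
    calc (2 * P : ℝ) * ∑ t ∈ Finset.image d Finset.univ, Complex.normSq (S t)
        ≤ (2 * P : ℝ) * ((P : ℝ) * (M : ℝ)) := by
          apply mul_le_mul_of_nonneg_left _ (by positivity)
          calc ∑ t ∈ Finset.image d Finset.univ, Complex.normSq (S t)
              ≤ (P : ℝ) * ∑ q : Fin P × Fin P, Complex.normSq (Y q) := hT
            _ ≤ (P : ℝ) * (M : ℝ) :=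
                mul_le_mul_of_nonneg_left hYbound (Nat.cast_nonneg P)
      _ = 2 * (M : ℝ) * (P : ℝ) ^ 2 := by ring
  apply le_antisymm
  · exact ciSup_le hub
  · exact hi₀ ▸ le_ciSup (Set.Finite.bddAbove (Set.finite_range _)) i₀
end
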